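/- Let X ∈ ℝ^{N×T} be a real matrix and let ρ be an integer with ρ ≥ rank(X). Then the infimum of (1/2)(‖P‖_F² + ‖Q‖_F²) over all P ∈ ℝ^{N×ρ} and Q ∈ ℝ^{T×ρ} satisfying X = P Qᵀ equals ‖X‖_*, and the infimum is attained. -/

import Mathlib

open Matrix

lemma transpose_mul_self_isHermitian {N T : ℕ} (X : Matrix (Fin N) (Fin T) ℝ) :
    (Xᵀ * X).IsHermitian := by
  have := Matrix.isHermitian_conjTranspose_mul_self X
  first
  | simpa [Matrix.conjTranspose_eq_transpose_of_trivial] using this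
  | simpa [Matrix.conjTranspose, starRingEnd_apply, star_trivial] using this

/-- Nuclear norm: sum of singular values (square roots of eigenvalues of `XᵀX`). -/
noncomputable def nuclearNorm {N T : ℕ} (X : Matrix (Fin N) (Fin T) ℝ) : ℝ :=
  ∑ i, Real.sqrt ((transpose_mul_self_isHermitian X).eigenvalues i)

/-- Frobenius norm `‖X‖_F = √(trace (XᵀX))`. -/
noncomputable def frobeniusNorm {N T : ℕ} (X : Matrix (Fin N) (Fin T) ℝ) : ℝ :=
  Real.sqrt (Matrix.trace (Xᵀ * X))

/-!
Diagonalise `XᵀX = V diag(σ²) Vᵀ` with `V` orthogonal, so that the columns of `XV` are orthogonal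
with norms `σₜ`. Given `X = P Qᵀ`, the matrix `U = XV diag(σ⁻¹)` is a partial isometry and
`∑ σₜ = tr (Uᵀ X V) = ⟪PᵀU, QᵀV⟫_F ≤ ½ (‖PᵀU‖² + ‖QᵀV‖²) ≤ ½ (‖P‖² + ‖Q‖²)`,
since multiplying by a partial isometry does not increase the Frobenius norm.
Equality holds for `P = XV diag(σ^{-1/2})`, `Q = V diag(σ^{1/2})`; only the `rank X ≤ ρ` columns
with `σₜ ≠ 0` are nonzero, and a matrix `E` with `EEᵀ` the projection onto those coordinates
packs them into `ρ` columns.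
-/

section TraceInequalities

variable {m n p : Type*} [Fintype m] [Fintype n] [Fintype p]

theorem trace_transpose_mul_self_nonneg (A : Matrix m n ℝ) : 0 ≤ trace (Aᵀ * A) :=
  (posSemidef_conjTranspose_mul_self A).trace_nonneg

theorem two_mul_trace_transpose_mul_le (A B : Matrix m n ℝ) :
    2 * trace (Aᵀ * B) ≤ trace (Aᵀ * A) + trace (Bᵀ * B) := by
  have h := trace_transpose_mul_self_nonneg (A - B)
  have hBA : trace (Bᵀ * A) = trace (Aᵀ * B) := by
    rw [← trace_transpose, transpose_mul, transpose_transpose]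
  simp only [transpose_sub, Matrix.sub_mul, Matrix.mul_sub, trace_sub] at h
  linarith

theorem trace_transpose_mul_self_le_of_partialIsometry [DecidableEq m] {W : Matrix m p ℝ}
    (hW : W * Wᵀ * W = W) (A : Matrix m n ℝ) : trace ((Aᵀ * W)ᵀ * (Aᵀ * W)) ≤ trace (Aᵀ * A) := by
  -- `1 - W Wᵀ` is an orthogonal projection
  set B := 1 - W * Wᵀ
  have hB : Bᵀ * B = B := by
    simp only [B, transpose_sub, transpose_one, transpose_mul, transpose_transpose, Matrix.sub_mul,
      Matrix.mul_sub, Matrix.one_mul, Matrix.mul_one, ← Matrix.mul_assoc, hW]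
    abel
  have h := trace_transpose_mul_self_nonneg (B * A)
  rw [transpose_mul, Matrix.mul_assoc, ← Matrix.mul_assoc Bᵀ, hB] at h
  simp only [B, Matrix.sub_mul, Matrix.mul_sub, Matrix.one_mul, trace_sub, sub_nonneg] at h
  rw [transpose_mul, transpose_transpose, trace_mul_comm]
  simpa only [Matrix.mul_assoc] using h

theorem trace_transpose_mul_self_mul_right {R : Type*} [CommSemiring R] (M : Matrix m n R)
    (E : Matrix n p R) :
    trace ((M * E)ᵀ * (M * E)) = trace (Mᵀ * M * (E * Eᵀ)) := by
  rw [transpose_mul, Matrix.mul_assoc, trace_mul_comm]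
  simp only [Matrix.mul_assoc]

end TraceInequalities

section OrthogonalColumns

variable {m n : Type*} [Fintype m] [Fintype n] [DecidableEq n]

theorem transpose_mul_self_mul_diagonal {R : Type*} [CommSemiring R] {M : Matrix m n R}
    {μ : n → R} (hM : Mᵀ * M = diagonal μ) (c : n → R) :
    (M * diagonal c)ᵀ * (M * diagonal c) = diagonal (fun t => c t * μ t * c t) := by
  rw [transpose_mul, diagonal_transpose, Matrix.mul_assoc, ← Matrix.mul_assoc Mᵀ, hM,
    diagonal_mul_diagonal, diagonal_mul_diagonal]
  simp only [mul_assoc]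

theorem mul_diagonal_eq_self_of_transpose_mul_self_eq_diagonal {M : Matrix m n ℝ} {μ : n → ℝ}
    (hM : Mᵀ * M = diagonal μ) {f : n → ℝ} (hf : ∀ t, μ t ≠ 0 → f t = 1) :
    M * diagonal f = M := by
  ext i t
  rw [mul_diagonal]
  by_cases hμ : μ t = 0
  · have hcol : ∑ j, M j t * M j t = 0 := by
      simpa [mul_apply, hμ] using congrFun (congrFun hM t) t
    rw [(Finset.sum_eq_zero_iff_of_nonneg fun j _ => mul_self_nonneg (M j t)).1 hcol i
      (Finset.mem_univ i) |> mul_self_eq_zero.1, zero_mul]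
  · rw [hf t hμ, mul_one]

theorem partialIsometry_mul_diagonal_inv {K : Type*} [Field K] {M : Matrix m n K} {σ : n → K}
    (hM : Mᵀ * M = diagonal (fun t => σ t ^ 2)) :
    M * diagonal σ⁻¹ * (M * diagonal σ⁻¹)ᵀ * (M * diagonal σ⁻¹) = M * diagonal σ⁻¹ := by
  rw [Matrix.mul_assoc, transpose_mul_self_mul_diagonal hM, Matrix.mul_assoc,
    diagonal_mul_diagonal]
  congr 2
  ext t
  by_cases hσ : σ t = 0
  · simp [hσ]
  · simp only [Pi.inv_apply]
    field_simp

end OrthogonalColumns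

theorem exists_mul_transpose_eq_diagonal_indicator {n : Type*} [Fintype n] [DecidableEq n]
    (S : Finset n) {ρ : ℕ} (hρ : S.card ≤ ρ) :
    ∃ E : Matrix n (Fin ρ) ℝ, E * Eᵀ = diagonal (fun t => if t ∈ S then 1 else 0) := by
  obtain ⟨g⟩ : Nonempty (S ↪ Fin ρ) :=
    Function.Embedding.nonempty_of_card_le (by simpa using hρ)
  refine ⟨of fun t k => if h : t ∈ S then if g ⟨t, h⟩ = k then 1 else 0 else 0, ?_⟩
  ext s t
  by_cases hs : s ∈ S <;> by_cases ht : t ∈ S <;>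
    simp [mul_apply, diagonal_apply, hs, ht, g.injective.eq_iff, Subtype.ext_iff]
  exact fun hst => ht (hst ▸ hs)

theorem sum_le_half_trace_of_eq_mul_transpose {m n r : Type*} [Fintype m] [Fintype n]
    [Fintype r] [DecidableEq m] [DecidableEq n] {X : Matrix m n ℝ} {V : Matrix n n ℝ}
    {σ : n → ℝ} (hV : V * Vᵀ = 1) (hXV : (X * V)ᵀ * (X * V) = diagonal (fun t => σ t ^ 2))
    {P : Matrix m r ℝ} {Q : Matrix n r ℝ} (hX : X = P * Qᵀ) :
    ∑ t, σ t ≤ (1 / 2) * (trace (Pᵀ * P) + trace (Qᵀ * Q)) := by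
  set U := X * V * diagonal σ⁻¹
  have hsum : ∑ t, σ t = trace ((Pᵀ * U)ᵀ * (Qᵀ * V)) := by
    have : (Pᵀ * U)ᵀ * (Qᵀ * V) = Uᵀ * (X * V) := by
      simp only [transpose_mul, transpose_transpose, hX, Matrix.mul_assoc]
    rw [this, transpose_mul, diagonal_transpose, Matrix.mul_assoc, hXV, diagonal_mul_diagonal,
      trace_diagonal]
    -- `σₜ⁻¹ σₜ² = σₜ` holds also where `σₜ = 0`, since then `σₜ⁻¹ = 0`
    refine Finset.sum_congr rfl fun t _ => ?_
    by_cases hσ : σ t = 0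
    · simp [hσ]
    · simp only [Pi.inv_apply]
      field_simp
  have hPU := trace_transpose_mul_self_le_of_partialIsometry
    (partialIsometry_mul_diagonal_inv hXV) P
  have hQV := trace_transpose_mul_self_le_of_partialIsometry (by rw [hV, Matrix.one_mul]) Q
  have := two_mul_trace_transpose_mul_le (Pᵀ * U) (Qᵀ * V)
  linarith

theorem exists_mul_transpose_eq_trace_eq_sum {m n : Type*} [Fintype m] [Fintype n]
    [DecidableEq n] {X : Matrix m n ℝ} {V : Matrix n n ℝ} {σ : n → ℝ} (hV : V * Vᵀ = 1)
    (hσ : ∀ t, 0 ≤ σ t) (hXV : (X * V)ᵀ * (X * V) = diagonal (fun t => σ t ^ 2)) {ρ : ℕ}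
    (hρ : (Finset.univ.filter fun t => σ t ≠ 0).card ≤ ρ) :
    ∃ (P : Matrix m (Fin ρ) ℝ) (Q : Matrix n (Fin ρ) ℝ),
      X = P * Qᵀ ∧ trace (Pᵀ * P) = ∑ t, σ t ∧ trace (Qᵀ * Q) = ∑ t, σ t := by
  obtain ⟨E, hE⟩ := exists_mul_transpose_eq_diagonal_indicator _ hρ
  have hVV : Vᵀ * V = diagonal (fun _ => 1) := by rw [diagonal_one]; exact mul_eq_one_comm.1 hV
  refine ⟨X * V * diagonal (fun t => (√(σ t))⁻¹) * E, V * diagonal (fun t => √(σ t)) * E,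
    ?_, ?_, ?_⟩
  · rw [transpose_mul, transpose_mul, diagonal_transpose]
    simp only [Matrix.mul_assoc]
    rw [← Matrix.mul_assoc E, hE, ← Matrix.mul_assoc (diagonal _) (diagonal _),
      diagonal_mul_diagonal, ← Matrix.mul_assoc (diagonal _) (diagonal _), diagonal_mul_diagonal]
    simp only [← Matrix.mul_assoc]
    rw [mul_diagonal_eq_self_of_transpose_mul_self_eq_diagonal hXV, Matrix.mul_assoc, hV,
      Matrix.mul_one]
    intro t ht
    have hσt : σ t ≠ 0 := by simpa using ht
    have : √(σ t) ≠ 0 := Real.sqrt_ne_zero'.2 ((hσ t).lt_of_ne' hσt)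
    simp [hσt, this]
  · rw [trace_transpose_mul_self_mul_right, transpose_mul_self_mul_diagonal hXV, hE,
      diagonal_mul_diagonal, trace_diagonal]
    refine Finset.sum_congr rfl fun t _ => ?_
    by_cases h : σ t = 0
    · simp [h]
    · simp only [Finset.mem_filter, Finset.mem_univ, true_and, ne_eq, h, not_false_eq_true,
        if_true, mul_one]
      have hne : √(σ t) ≠ 0 := Real.sqrt_ne_zero'.2 ((hσ t).lt_of_ne' h)
      field_simp
      rw [Real.sq_sqrt (hσ t)]
  · rw [trace_transpose_mul_self_mul_right, transpose_mul_self_mul_diagonal hVV, hE,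
      diagonal_mul_diagonal, trace_diagonal]
    refine Finset.sum_congr rfl fun t _ => ?_
    by_cases h : σ t = 0
    · simp [h]
    · simp [h, Real.mul_self_sqrt (hσ t)]

theorem frobeniusNorm_sq {N T : ℕ} (X : Matrix (Fin N) (Fin T) ℝ) :
    frobeniusNorm X ^ 2 = trace (Xᵀ * X) :=
  Real.sq_sqrt (trace_transpose_mul_self_nonneg X)

section SingularValues

variable {N T : ℕ} (X : Matrix (Fin N) (Fin T) ℝ)

noncomputable def singularValues : Fin T → ℝ :=
  fun t => √((transpose_mul_self_isHermitian X).eigenvalues t)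

theorem nuclearNorm_eq_sum_singularValues : nuclearNorm X = ∑ t, singularValues X t := rfl

theorem singularValues_nonneg (t : Fin T) : 0 ≤ singularValues X t := Real.sqrt_nonneg _

theorem card_singularValues_ne_zero :
    (Finset.univ.filter fun t => singularValues X t ≠ 0).card = X.rank := by
  rw [← rank_transpose_mul_self, (transpose_mul_self_isHermitian X).rank_eq_card_non_zero_eigs,
    Fintype.card_subtype]
  exact congrArg Finset.card <| Finset.filter_congr fun t _ =>
    not_congr (Real.sqrt_eq_zero ((posSemidef_conjTranspose_mul_self X).eigenvalues_nonneg t))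

theorem exists_orthogonal_transpose_mul_self_eq_diagonal_sq :
    ∃ V : Matrix (Fin T) (Fin T) ℝ, V * Vᵀ = 1 ∧
      (X * V)ᵀ * (X * V) = diagonal (fun t => singularValues X t ^ 2) := by
  have hA := transpose_mul_self_isHermitian X
  refine ⟨hA.eigenvectorUnitary, ?_, ?_⟩
  · simpa using (Matrix.mem_orthogonalGroup_iff _ _).1 hA.eigenvectorUnitary.2
  · have := hA.conjStarAlgAut_star_eigenvectorUnitary
    simp only [Unitary.conjStarAlgAut_apply, Unitary.coe_star, RCLike.ofReal_real_eq_id,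
      CompTriple.comp_eq, star_eq_conjTranspose, conjTranspose_eq_transpose_of_trivial,
      transpose_transpose] at this
    rw [transpose_mul, Matrix.mul_assoc, ← Matrix.mul_assoc Xᵀ, ← Matrix.mul_assoc, this]
    congr 1
    ext t
    exact (Real.sq_sqrt ((posSemidef_conjTranspose_mul_self X).eigenvalues_nonneg t)).symm

end SingularValues

/-- for `ρ ≥ rank X`, the infimum of `(1/2)(‖P‖_F² + ‖Q‖_F²)` over all
factorizations `X = P Qᵀ` with `P ∈ ℝ^{N×ρ}`, `Q ∈ ℝ^{T×ρ}` equals `‖X‖_*` and is attained.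
(`IsLeast` expresses precisely that the value is the attained infimum.) -/
theorem nuclearNorm_isLeast_factorization {N T ρ : ℕ} (X : Matrix (Fin N) (Fin T) ℝ)
    (hρ : X.rank ≤ ρ) :
    IsLeast {v : ℝ | ∃ (P : Matrix (Fin N) (Fin ρ) ℝ) (Q : Matrix (Fin T) (Fin ρ) ℝ),
        X = P * Qᵀ ∧ v = (1 / 2) * (frobeniusNorm P ^ 2 + frobeniusNorm Q ^ 2)}
      (nuclearNorm X) := by
  obtain ⟨V, hV, hXV⟩ := exists_orthogonal_transpose_mul_self_eq_diagonal_sq X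
  rw [nuclearNorm_eq_sum_singularValues]
  constructor
  · obtain ⟨P, Q, hX, hP, hQ⟩ := exists_mul_transpose_eq_trace_eq_sum hV
      (singularValues_nonneg X) hXV ((card_singularValues_ne_zero X).trans_le hρ)
    refine ⟨P, Q, hX, ?_⟩
    rw [frobeniusNorm_sq, frobeniusNorm_sq, hP, hQ]
    ring
  · rintro v ⟨P, Q, hX, rfl⟩
    rw [frobeniusNorm_sq, frobeniusNorm_sq]
    exact sum_le_half_trace_of_eq_mul_transpose hV hXV hX
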